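/- arXiv:math/0211119 — 2 statements merged into one kernel-verified Lean document; each statement's English description precedes it below -/
import Mathlib

section
/- Let g ∈ ℂ[X] be a nonzero polynomial that splits into linear factors and let f ∈ ℂ[X]. Then g divides f if and only if for every p ∈ ℂ[X] the rational function p·f/g is a polynomial (has zero total residue at every point), equivalently: g divides f iff Σ_{b∈ℂ} Res_{X=b}(p·f/g) = 0 for all p ∈ ℂ[X]. -/
/-! Polynomials have no residues, so `g ∣ f` forces every `p f / g` to have total residue zero.
Conversely, if `g ∤ f`, write `f / g = n / d` in lowest terms: `d` is not constant, so it has a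
root `b`, and for `p = d / (X - b)` the rational function `p f / g = n / (X - b)` has the single
residue `n(b)`, which is nonzero because `n` and `d` are coprime. -/

open Polynomial

/-- The residue of a rational function `h` at the point `b`: the coefficient of
`(X - b)⁻¹` in the Laurent expansion of `h` about `b`. -/
noncomputable def residue (h : RatFunc ℂ) (b : ℂ) : ℂ :=
  ((RatFunc.laurent b h : LaurentSeries ℂ)).coeff (-1)

/-- The total residue `Res⁺`: the sum of the residues of `h` over all points of `ℂ`. -/
noncomputable def totalResidue (h : RatFunc ℂ) : ℂ := ∑ᶠ b : ℂ, residue h b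

namespace LaurentSeries

open HahnSeries

variable {K : Type*} [Field K]

theorem coeff_coe_div_of_neg (s t : PowerSeries K) (ht : PowerSeries.constantCoeff t ≠ 0)
    {n : ℤ} (hn : n < 0) : ((s : K⸨X⸩) / t).coeff n = 0 := by
  have ht' : (t : K⸨X⸩) ≠ 0 :=
    (map_ne_zero_iff _ ofPowerSeries_injective).mpr (by rintro rfl; simp at ht)
  have hdiv : (s : K⸨X⸩) / t = ((s * t⁻¹ : PowerSeries K) : K⸨X⸩) := by
    rw [div_eq_iff ht', ← map_mul, mul_assoc, PowerSeries.inv_mul_cancel _ ht, mul_one]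
  rw [hdiv, PowerSeries.coeff_coe, if_pos hn]

theorem coeff_div_single_one (x : K⸨X⸩) (n : ℤ) :
    (x / single 1 1).coeff n = x.coeff (n + 1) := by
  rw [div_eq_mul_inv, inv_single, inv_one]
  simpa using coeff_mul_single_add (x := x) (r := 1) (a := n + 1) (b := -1)

end LaurentSeries

theorem residue_algebraMap (q : ℂ[X]) (b : ℂ) :
    residue (algebraMap ℂ[X] (RatFunc ℂ) q) b = 0 := by
  rw [residue, RatFunc.laurent_algebraMap, ← IsScalarTower.algebraMap_apply,
    algebraMap_hahnSeries_apply, PowerSeries.coeff_coe, if_pos (by norm_num)]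

theorem residue_div_X_sub_C (f : ℂ[X]) (b a : ℂ) :
    residue (algebraMap ℂ[X] (RatFunc ℂ) f / algebraMap ℂ[X] (RatFunc ℂ) (X - C b)) a
      = if a = b then f.eval b else 0 := by
  have htaylor : taylor a (X - C b) = X + C (a - b) := by
    rw [map_sub, taylor_X, taylor_C, C_sub]; ring
  rw [residue, map_div₀, RatFunc.laurent_algebraMap, RatFunc.laurent_algebraMap,
    RatFunc.algebraMap_apply_div, algebraMap_hahnSeries_apply, algebraMap_hahnSeries_apply,
    htaylor]
  split_ifs with hab
  · subst hab
    rw [sub_self, C_0, add_zero, coe_X, HahnSeries.ofPowerSeries_X,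
      LaurentSeries.coeff_div_single_one, neg_add_cancel, ← Nat.cast_zero,
      LaurentSeries.coeff_coe_powerSeries, Polynomial.coeff_coe, taylor_coeff_zero]
  · exact LaurentSeries.coeff_coe_div_of_neg _ _ (by simpa [sub_eq_zero] using hab) (by norm_num)

theorem totalResidue_algebraMap (q : ℂ[X]) : totalResidue (algebraMap ℂ[X] (RatFunc ℂ) q) = 0 :=
  finsum_eq_zero_of_forall_eq_zero (residue_algebraMap q)

theorem totalResidue_div_X_sub_C (f : ℂ[X]) (b : ℂ) :
    totalResidue (algebraMap ℂ[X] (RatFunc ℂ) f / algebraMap ℂ[X] (RatFunc ℂ) (X - C b))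
      = f.eval b := by
  rw [totalResidue, finsum_eq_single _ b fun a ha => by rw [residue_div_X_sub_C, if_neg ha],
    residue_div_X_sub_C, if_pos rfl]

theorem exists_eq_algebraMap_iff_forall_totalResidue_mul_eq_zero (x : RatFunc ℂ) :
    (∃ q : ℂ[X], x = algebraMap ℂ[X] (RatFunc ℂ) q) ↔
      ∀ p : ℂ[X], totalResidue (algebraMap ℂ[X] (RatFunc ℂ) p * x) = 0 := by
  refine ⟨fun ⟨q, hq⟩ p => by rw [hq, ← map_mul, totalResidue_algebraMap], fun H => ?_⟩
  by_contra hx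
  obtain ⟨b, hb⟩ : ∃ b, x.denom.IsRoot b := by
    refine IsAlgClosed.exists_root _ fun hdeg => hx ⟨x.num, ?_⟩
    have hone := x.monic_denom.eq_one_of_isUnit (isUnit_iff_degree_eq_zero.mpr hdeg)
    rw [← x.num_div_denom, hone, map_one, div_one, RatFunc.num_algebraMap]
  obtain ⟨d, hd⟩ := dvd_iff_isRoot.mpr hb
  have hmul : algebraMap ℂ[X] (RatFunc ℂ) d * x =
      algebraMap ℂ[X] (RatFunc ℂ) x.num / algebraMap ℂ[X] (RatFunc ℂ) (X - C b) := by
    have hd0 : algebraMap ℂ[X] (RatFunc ℂ) d ≠ 0 :=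
      RatFunc.algebraMap_ne_zero (right_ne_zero_of_mul (hd ▸ x.denom_ne_zero))
    have hXb := RatFunc.algebraMap_ne_zero (X_sub_C_ne_zero b)
    nth_rw 1 [← x.num_div_denom]
    rw [hd, map_mul]
    field_simp
  have hnum : x.num.eval b ≠ 0 := by
    simpa [hb.eq_zero] using aeval_ne_zero_of_isCoprime x.isCoprime_num_denom b
  exact hnum (by rw [← totalResidue_div_X_sub_C, ← hmul, H])

theorem RatFunc.dvd_iff_exists_div_eq_algebraMap {K : Type*} [Field K] {f g : K[X]}
    (hg : g ≠ 0) : g ∣ f ↔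
      ∃ q : K[X], algebraMap K[X] (RatFunc K) f / algebraMap K[X] (RatFunc K) g =
        algebraMap K[X] (RatFunc K) q := by
  simp_rw [div_eq_iff (RatFunc.algebraMap_ne_zero hg), ← map_mul,
    (IsFractionRing.injective K[X] (RatFunc K)).eq_iff, mul_comm _ g, dvd_def]

theorem stmt6_general (g f : Polynomial ℂ) (hg : g ≠ 0) :
    g ∣ f ↔ ∀ p : Polynomial ℂ,
      totalResidue (algebraMap (Polynomial ℂ) (RatFunc ℂ) (p * f) /
        algebraMap (Polynomial ℂ) (RatFunc ℂ) g) = 0 := by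
  simp_rw [RatFunc.dvd_iff_exists_div_eq_algebraMap hg, map_mul, mul_div_assoc]
  exact exists_eq_algebraMap_iff_forall_totalResidue_mul_eq_zero _

theorem stmt6 (g f : Polynomial ℂ) (hg : g ≠ 0)
    (hsplits : (g.map (RingHom.id ℂ)).Splits) :
    g ∣ f ↔ ∀ p : Polynomial ℂ,
      totalResidue (algebraMap (Polynomial ℂ) (RatFunc ℂ) (p * f) /
        algebraMap (Polynomial ℂ) (RatFunc ℂ) g) = 0 :=
  stmt6_general g f hg
end

section
/- Let f, g ∈ ℂ[X] with g monic, nonconstant, and splitting over ℂ. If f/g has zero residue at every root of g (i.e., Res_{X=b}(f/g) = 0 for all b ∈ ℂ) and moreover Res_{X=b}(X^m · f/g) = 0 for all b ∈ ℂ and all m ≥ 0, then g divides f. -/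
/-! By linearity the residues of `P * (f / g)` vanish for every polynomial `P`; taking
`P = (X - b) ^ k` picks out the coefficient of `(X - b) ^ (-1 - k)`, so `f / g` has no pole.
Write `f / g = p / q` in lowest terms. At a root `b` of `q`, the expansion of `p = (f / g) * q`
about `b` is a power series times one without constant term, so `p (b) = 0` as well, against
coprimality. Hence `q` has no roots, so `q = 1` since `ℂ` is algebraically closed, and
`f = g * p`. -/

open Polynomial

section Laurent

variable {K : Type*} [Field K]

def RatFunc.IsRegularAt (u : RatFunc K) (b : K) : Prop :=
  0 ≤ ((RatFunc.laurent b u : RatFunc K) : LaurentSeries K).orderTop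

lemma RatFunc.coe_algebraMap_polynomial (p : K[X]) :
    ((algebraMap K[X] (RatFunc K) p : RatFunc K) : LaurentSeries K) =
      ((p : PowerSeries K) : LaurentSeries K) :=
  (RatFunc.coe_coe p).symm

lemma RatFunc.coeff_laurent_C_mul (b a : K) (u : RatFunc K) (n : ℤ) :
    ((laurent b (C a * u) : RatFunc K) : LaurentSeries K).coeff n =
      a * ((laurent b u : RatFunc K) : LaurentSeries K).coeff n := by
  have hC : ((C a : RatFunc K) : LaurentSeries K) = HahnSeries.C a := by
    rw [← algebraMap_C, coe_algebraMap_polynomial, Polynomial.coe_C, PowerSeries.coe_C]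
  rw [map_mul, laurent_C, map_mul, hC, HahnSeries.C_apply, HahnSeries.coeff_single_zero_mul]

lemma RatFunc.coeff_laurent_X_sub_C_pow_mul (b : K) (k : ℕ) (u : RatFunc K) (n : ℤ) :
    ((laurent b (algebraMap K[X] (RatFunc K) ((Polynomial.X - Polynomial.C b) ^ k) * u) :
      RatFunc K) : LaurentSeries K).coeff (n + k) =
      ((laurent b u : RatFunc K) : LaurentSeries K).coeff n := by
  rw [map_pow, map_sub, algebraMap_X, algebraMap_C, map_mul, map_pow, map_sub, laurent_X,
    laurent_C, add_sub_cancel_right, map_mul, map_pow, coe_X, ← single_one_eq_pow,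
    HahnSeries.coeff_single_mul_add, one_mul]

lemma RatFunc.isRegularAt_of_coeff_neg_one_eq_zero {u : RatFunc K} {b : K}
    (h : ∀ p : K[X],
      ((laurent b (algebraMap K[X] (RatFunc K) p * u) : RatFunc K) : LaurentSeries K).coeff (-1)
        = 0) :
    u.IsRegularAt b := by
  refine HahnSeries.le_orderTop_iff_forall.mpr fun n hn => ?_
  obtain ⟨k, rfl⟩ : ∃ k : ℕ, n = -1 - k := ⟨(-1 - n).toNat, by
    have : n < 0 := by exact_mod_cast hn
    omega⟩
  rw [← coeff_laurent_X_sub_C_pow_mul b k, sub_add_cancel]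
  exact h _

lemma RatFunc.IsRegularAt.eval_eq_zero_of_mul_eq {u : RatFunc K} {b : K} (hu : u.IsRegularAt b)
    {p q : K[X]} (hpq : u * algebraMap K[X] (RatFunc K) p = algebraMap K[X] (RatFunc K) q)
    (hp : p.eval b = 0) : q.eval b = 0 := by
  have hp_order : 1 ≤ ((taylor b p : PowerSeries K) : LaurentSeries K).orderTop := by
    refine HahnSeries.le_orderTop_iff_forall.mpr fun j hj => ?_
    have : j < 1 := by exact_mod_cast hj
    rw [PowerSeries.coeff_coe]
    split_ifs
    · rfl
    · rw [show j = 0 by omega, Polynomial.coeff_coe, Int.natAbs_zero, taylor_coeff_zero, hp]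
  have hq_order : 0 < ((taylor b q : PowerSeries K) : LaurentSeries K).orderTop := by
    have hlaurent := congrArg (fun w => ((laurent b w : RatFunc K) : LaurentSeries K)) hpq
    simp only [map_mul, laurent_algebraMap, coe_algebraMap_polynomial] at hlaurent
    rw [← hlaurent]
    calc (0 : WithTop ℤ) < 0 + 1 := by norm_num
      _ ≤ _ := (add_le_add hu hp_order).trans HahnSeries.orderTop_add_le_mul
  have := HahnSeries.coeff_eq_zero_of_lt_orderTop hq_order
  rwa [← Nat.cast_zero, HahnSeries.ofPowerSeries_apply_coeff, Polynomial.coeff_coe,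
    taylor_coeff_zero] at this

lemma RatFunc.denom_eq_one_of_forall_isRegularAt [IsAlgClosed K] {u : RatFunc K}
    (hu : ∀ b, u.IsRegularAt b) : u.denom = 1 := by
  by_contra hne
  obtain ⟨b, hb⟩ := IsAlgClosed.exists_root u.denom fun h =>
    hne (u.monic_denom.natDegree_eq_zero.mp (natDegree_eq_zero_iff_degree_le_zero.mpr h.le))
  have hnum : u.num.eval b = 0 := by
    refine (hu b).eval_eq_zero_of_mul_eq ?_ hb
    exact ((div_eq_iff (algebraMap_ne_zero u.denom_ne_zero)).mp u.num_div_denom).symm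
  obtain ⟨a, c, hac⟩ := u.isCoprime_num_denom
  simpa [hnum, hb.eq_zero] using congrArg (Polynomial.eval b) hac

end Laurent

lemma residue_algebraMap_mul_eq_zero {u : RatFunc ℂ} {b : ℂ}
    (hm : ∀ m : ℕ, residue (RatFunc.X ^ m * u) b = 0) (p : ℂ[X]) :
    residue (algebraMap ℂ[X] (RatFunc ℂ) p * u) b = 0 := by
  induction p using Polynomial.induction_on' with
  | add p q hp hq =>
    simp only [residue, map_add, add_mul, HahnSeries.coeff_add] at hp hq ⊢
    rw [hp, hq, add_zero]
  | monomial n a =>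
    rw [← C_mul_X_pow_eq_monomial, map_mul, map_pow, RatFunc.algebraMap_C,
      RatFunc.algebraMap_X, mul_assoc, residue, RatFunc.coeff_laurent_C_mul, ← residue, hm n,
      mul_zero]

theorem stmt14_general (f g : Polynomial ℂ) (hmonic : g.Monic)
    (hm : ∀ (m : ℕ) (b : ℂ), residue (RatFunc.X ^ m *
      (algebraMap (Polynomial ℂ) (RatFunc ℂ) f /
        algebraMap (Polynomial ℂ) (RatFunc ℂ) g)) b = 0) :
    g ∣ f := by
  set u := algebraMap ℂ[X] (RatFunc ℂ) f / algebraMap ℂ[X] (RatFunc ℂ) g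
  have hregular : ∀ b, u.IsRegularAt b := fun b =>
    RatFunc.isRegularAt_of_coeff_neg_one_eq_zero
      (residue_algebraMap_mul_eq_zero fun m => hm m b)
  have hnum : u.num * g = f * u.denom := (RatFunc.num_mul_eq_mul_denom_iff hmonic.ne_zero).mpr rfl
  rw [RatFunc.denom_eq_one_of_forall_isRegularAt hregular, mul_one] at hnum
  exact ⟨u.num, by rw [← hnum, mul_comm]⟩

theorem stmt14 (f g : Polynomial ℂ) (hmonic : g.Monic) (hconst : 0 < g.degree)
    (hsplits : (g.map (RingHom.id ℂ)).Splits)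
    (h0 : ∀ b : ℂ, residue (algebraMap (Polynomial ℂ) (RatFunc ℂ) f /
      algebraMap (Polynomial ℂ) (RatFunc ℂ) g) b = 0)
    (hm : ∀ (m : ℕ) (b : ℂ), residue (RatFunc.X ^ m *
      (algebraMap (Polynomial ℂ) (RatFunc ℂ) f /
        algebraMap (Polynomial ℂ) (RatFunc ℂ) g)) b = 0) :
    g ∣ f :=
  stmt14_general f g hmonic hm
end
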